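/- Monotonicity of FastSet: for all claim sequences γ, γ' and every address a such that γ is an interleaving a-maximal cut of γ' (γ ⊑_a γ'), for every state s with γ↓s and γ'↓s, and for every claim c with address a: if (γ c)↓s then (γ' c)↓s. -/

import Mathlib

/-- Semantics of a sequence of claims: process claims left to right,
undefined (`none`) as soon as one claim is undefined. -/
def run {State Claim : Type*} (sem : Claim → State → Option State) :
    List Claim → State → Option State
  | [], s => some s
  | c :: γ, s => (sem c s).bind (run sem γ)

/-- A claim sequence is valid (defined) in a state. -/
def Defined {State Claim : Type*} (sem : Claim → State → Option State)
    (γ : List Claim) (s : State) : Prop :=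
  run sem γ s ≠ none

/-- Weak equivalence of claim sequences: whenever both are valid in a state,
they yield the same result. -/
def WeakEquiv {State Claim : Type*} (sem : Claim → State → Option State)
    (γ γ' : List Claim) : Prop :=
  ∀ s : State, Defined sem γ s → Defined sem γ' s → run sem γ s = run sem γ' s

/-- Weak independence of claims: whenever both are valid in a state, both
processing orders are valid and yield the same result. -/
def WeakIndep {State Claim : Type*} (sem : Claim → State → Option State)
    (c c' : Claim) : Prop :=
  ∀ s : State, sem c s ≠ none → sem c' s ≠ none →
    Defined sem [c, c'] s ∧ Defined sem [c', c] s ∧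
      run sem [c, c'] s = run sem [c', c] s

/-- The reduct (filtering) of a claim sequence by an address: the sublist of
claims issued by that address, in order. -/
def reduct {Claim Address : Type*} [DecidableEq Address] (addr : Claim → Address)
    (γ : List Claim) (a : Address) : List Claim :=
  γ.filter (fun c => decide (addr c = a))

/-- Interleaving equivalence: the reducts by every address coincide. -/
def InterEquiv {Claim Address : Type*} [DecidableEq Address] (addr : Claim → Address)
    (γ γ' : List Claim) : Prop :=
  ∀ a : Address, reduct addr γ a = reduct addr γ' a

/-- `γ` is an interleaving cut of `γ'`: each reduct of `γ` is a prefix of the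
corresponding reduct of `γ'`. -/
def InterCut {Claim Address : Type*} [DecidableEq Address] (addr : Claim → Address)
    (γ γ' : List Claim) : Prop :=
  ∀ a : Address, reduct addr γ a <+: reduct addr γ' a

/-- `γ` is an interleaving `a`-maximal cut of `γ'`. -/
def InterMaxCut {Claim Address : Type*} [DecidableEq Address] (addr : Claim → Address)
    (a : Address) (γ γ' : List Claim) : Prop :=
  InterCut addr γ γ' ∧ reduct addr γ a = reduct addr γ' a

/-- Compatibility of claim sequences: for every address, one reduct is a
prefix of the other. -/
def Compatible {Claim Address : Type*} [DecidableEq Address] (addr : Claim → Address)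
    (γ γ' : List Claim) : Prop :=
  ∀ a : Address, reduct addr γ a <+: reduct addr γ' a ∨ reduct addr γ' a <+: reduct addr γ a

private lemma run_append {State Claim : Type*} (sem : Claim → State → Option State)
    (γ δ : List Claim) (s : State) :
    run sem (γ ++ δ) s = (run sem γ s).bind (run sem δ) := by
  induction γ generalizing s with
  | nil => simp [run]
  | cons e ρ ih =>
    cases he : sem e s <;> simp [run, he, ih]

private lemma comm_lemma {State Claim : Type*} (sem : Claim → State → Option State)
    (d : Claim) (δ : List Claim) (s : State) (hd : sem d s ≠ none)
    (hδ : run sem δ s ≠ none) (hind : ∀ e ∈ δ, WeakIndep sem d e) :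
    run sem (δ ++ [d]) s = run sem (d :: δ) s ∧ run sem (δ ++ [d]) s ≠ none := by
  induction δ generalizing s with
  | nil =>
    refine ⟨rfl, ?_⟩
    cases hds : sem d s with
    | none => exact absurd hds hd
    | some w => simp [run, hds]
  | cons e ρ ih =>
    have he : sem e s ≠ none := by
      intro hh; simp [run, hh] at hδ
    obtain ⟨hde, hed, heq⟩ := hind e List.mem_cons_self s hd he
    obtain ⟨v, hv⟩ := Option.ne_none_iff_exists'.mp he
    have hρ : run sem ρ v ≠ none := by
      simpa [run, hv] using hδ
    have hdv : sem d v ≠ none := by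
      intro hh
      apply hed
      simp [Defined, run, hv, hh]
    obtain ⟨hcomm, hne⟩ := ih v hdv hρ (fun f hf => hind f (List.mem_cons_of_mem e hf))
    have key : run sem ((e :: ρ) ++ [d]) s = (sem d v).bind (run sem ρ) := by
      rw [show (e :: ρ) ++ [d] = e :: (ρ ++ [d]) from rfl,
          show run sem (e :: (ρ ++ [d])) s = (sem e s).bind (run sem (ρ ++ [d])) from rfl,
          hv, Option.bind_some, hcomm]
      rfl
    constructor
    · rw [key]
      have h1 : run sem (d :: e :: ρ) s = (run sem [d, e] s).bind (run sem ρ) := by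
        have := run_append sem [d, e] ρ s
        simpa using this
      have h2 : run sem [e, d] s = sem d v := by
        cases hdvv : sem d v <;> simp [run, hv, hdvv]
      rw [h1, heq, h2]
    · rw [key]
      intro hh
      exact hne (hcomm.trans hh)

private lemma reduct_nil_indep {Claim Address : Type*} [DecidableEq Address]
    {addr : Claim → Address} {α : List Claim} {b : Address}
    (hα : reduct addr α b = []) : ∀ f ∈ α, addr f ≠ b := by
  intro f hf hfb
  have : f ∈ reduct addr α b := by
    simp [reduct, List.mem_filter, hf, hfb]
  simp [hα] at this

theorem fastset_monotonicity {State Claim Address : Type*} [DecidableEq Address]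
    (sem : Claim → State → Option State) (addr : Claim → Address)
    (hindep : ∀ c c' : Claim, addr c ≠ addr c' → WeakIndep sem c c')
    (γ γ' : List Claim) (a : Address) (hcut : InterMaxCut addr a γ γ')
    (s : State) (hγ : Defined sem γ s) (hγ' : Defined sem γ' s)
    (c : Claim) (hc : addr c = a) (h : Defined sem (γ ++ [c]) s) :
    Defined sem (γ' ++ [c]) s := by
  induction γ generalizing γ' s with
  | nil =>
    obtain ⟨hcut, hmax⟩ := hcut
    have hnil : reduct addr γ' a = [] := by
      simpa [reduct] using hmax.symm
    have hcs : sem c s ≠ none := by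
      intro hh; simp [Defined, run, hh] at h
    have hind : ∀ e ∈ γ', WeakIndep sem c e := by
      intro e he
      have : addr c ≠ addr e := by
        rw [hc]; intro hh; exact reduct_nil_indep hnil e he hh.symm
      exact hindep c e this
    exact (comm_lemma sem c γ' s hcs hγ' hind).2
  | cons e ρ ih =>
    obtain ⟨hcut, hmax⟩ := hcut
    obtain ⟨t, ht⟩ : ∃ t, sem e s = some t := by
      rcases hes : sem e s with _ | t
      · simp [Defined, run, hes] at hγ
      · exact ⟨t, rfl⟩
    have hγb : reduct addr (e :: ρ) (addr e) = e :: reduct addr ρ (addr e) := by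
      simp [reduct, List.filter_cons]
    obtain ⟨l, hl⟩ := hcut (addr e)
    rw [hγb] at hl
    have hγ'b : reduct addr γ' (addr e) = e :: (reduct addr ρ (addr e) ++ l) := by
      rw [← hl]; simp
    obtain ⟨α, β, hsplit, hα', -, hβ'⟩ :=
      List.filter_eq_cons_iff.mp (by simpa [reduct] using hγ'b)
    have hα : reduct addr α (addr e) = [] := List.filter_eq_nil_iff.mpr hα'
    have hβ : reduct addr β (addr e) = reduct addr ρ (addr e) ++ l := hβ'
    -- commute e to the front of α
    have hαind : ∀ f ∈ α, WeakIndep sem e f := by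
      intro f hf
      exact hindep e f (fun hh => reduct_nil_indep hα f hf hh.symm)
    have hαdef : run sem α s ≠ none := by
      intro hh
      rw [hsplit] at hγ'
      simp [Defined, run_append, hh] at hγ'
    obtain ⟨hcomm, -⟩ := comm_lemma sem e α s (by simp [ht]) hαdef hαind
    have hαe : run sem (α ++ [e]) s = run sem α t := by
      rw [hcomm]; simp [run, ht]
    have hγ'eq : ∀ δ : List Claim,
        run sem (α ++ e :: β ++ δ) s = run sem ((α ++ β) ++ δ) t := by
      intro δ
      have h1 : α ++ e :: β ++ δ = (α ++ [e]) ++ (β ++ δ) := by simp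
      rw [h1, run_append, hαe, ← run_append, List.append_assoc]
    have hγ'run : run sem γ' s = run sem (α ++ β) t := by
      have := hγ'eq []
      simpa [hsplit] using this
    have hρt : Defined sem ρ t := by
      simpa [Defined, run, ht] using hγ
    have hαβt : Defined sem (α ++ β) t := by
      rw [Defined, ← hγ'run]; exact hγ'
    have hρct : Defined sem (ρ ++ [c]) t := by
      simpa [Defined, run, ht] using h
    have hsum : ∀ b', reduct addr (α ++ β) b' = reduct addr α b' ++ reduct addr β b' := by
      intro b'; simp [reduct]
    have hcut' : InterMaxCut addr a ρ (α ++ β) := by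
      constructor
      · intro b'
        by_cases hbb : b' = addr e
        · subst hbb
          refine ⟨l, ?_⟩
          rw [hsum, hα, hβ]; simp
        · have hne' : addr e ≠ b' := fun hh => hbb hh.symm
          have h1 : reduct addr ρ b' = reduct addr (e :: ρ) b' := by
            simp [reduct, List.filter_cons, hne']
          have h2 : reduct addr γ' b' = reduct addr (α ++ β) b' := by
            rw [hsplit]
            simp [reduct, List.filter_cons, hne']
          rw [h1, ← h2]
          exact hcut b'
      · by_cases hba : addr e = a
        · have h1 : reduct addr γ' a = e :: reduct addr (α ++ β) a := by
            have e1 : reduct addr γ' a = reduct addr α a ++ reduct addr (e :: β) a := by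
              rw [hsplit]; simp [reduct]
            have e2 : reduct addr (e :: β) a = e :: reduct addr β a := by
              simp [reduct, List.filter_cons, hba]
            have hαa : reduct addr α a = [] := hba ▸ hα
            rw [e1, e2, hsum, hαa]
            simp
          have h0 : reduct addr (e :: ρ) a = e :: reduct addr ρ a := by
            simp [reduct, List.filter_cons, hba]
          rw [h0, h1] at hmax
          simpa using hmax
        · have h1 : reduct addr ρ a = reduct addr (e :: ρ) a := by
            simp [reduct, List.filter_cons, hba]
          have h2 : reduct addr γ' a = reduct addr (α ++ β) a := by
            rw [hsplit]
            simp [reduct, List.filter_cons, hba]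
          rw [h1, hmax, h2]
    rw [Defined, hsplit, show (α ++ e :: β) ++ [c] = α ++ e :: β ++ [c] by simp, hγ'eq [c]]
    exact ih (α ++ β) hcut' t hρt hαβt hρct
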